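/- arXiv:2511.03869 — 2 statements merged into one kernel-verified Lean document; each statement's English description precedes it below -/
import Mathlib

section
/- A restriction semigroup S is proper (s σ t and s* = t* imply s = t) if and only if the compatibility relation ⌣ coincides with the minimum reduced congruence σ. -/
/-- A restriction semigroup: an Ehresmann semigroup (a semigroup with a unary
operation `rstar` satisfying `x x* = x`, `x* y* = y* x* = (x* y*)*`, `(xy)* = (x* y)*`)
which additionally satisfies the identity `x* y = y (xy)*`. -/
class RestrictionSemigroup (S : Type*) extends Semigroup S where
  rstar : S → S
  mul_rstar_self : ∀ x : S, x * rstar x = x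
  rstar_comm : ∀ x y : S, rstar x * rstar y = rstar y * rstar x
  rstar_mul_proj : ∀ x y : S, rstar x * rstar y = rstar (rstar x * rstar y)
  rstar_mul : ∀ x y : S, rstar (x * y) = rstar (rstar x * y)
  restriction : ∀ x y : S, rstar x * y = y * rstar (x * y)

open RestrictionSemigroup

variable {S : Type*} [RestrictionSemigroup S]

/-- `r` is a congruence (with respect to multiplication and `*`) identifying all
projections. -/
def IsProjCong (r : S → S → Prop) : Prop :=
  Equivalence r ∧
  (∀ a b c d : S, r a b → r c d → r (a * c) (b * d)) ∧
  (∀ a b : S, r a b → r (rstar a) (rstar b)) ∧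
  (∀ a b : S, r (rstar a) (rstar b))

/-- The minimum congruence identifying all projections. -/
def sigmaRel (a b : S) : Prop := ∀ r : S → S → Prop, IsProjCong r → r a b

/-! `s * t*` lies below `s` in the natural order, so it is σ-related to `s`, and
`(s * t*)* = s* * t*` is symmetric in `s` and `t`. Hence `s * t*` and `t * s*` always have
equal stars, and they are σ-related exactly when `s σ t`. Compatible elements are therefore
σ-related, and properness turns `s σ t` into `s * t* = t * s*`. Conversely, if σ is
compatibility then `s σ t` and `s* = t*` give `s = s * s* = s * t* = t * s* = t * t* = t`. -/

lemma sigmaRel_refl (a : S) : sigmaRel a a := fun _ hr => hr.1.refl a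

lemma sigmaRel.symm {a b : S} (h : sigmaRel a b) : sigmaRel b a :=
  fun r hr => hr.1.symm (h r hr)

lemma sigmaRel.trans {a b c : S} (hab : sigmaRel a b) (hbc : sigmaRel b c) : sigmaRel a c :=
  fun r hr => hr.1.trans (hab r hr) (hbc r hr)

lemma sigmaRel.mul {a b c d : S} (hab : sigmaRel a b) (hcd : sigmaRel c d) :
    sigmaRel (a * c) (b * d) :=
  fun r hr => hr.2.1 a b c d (hab r hr) (hcd r hr)

lemma sigmaRel_rstar (a b : S) : sigmaRel (rstar a) (rstar b) := fun _ hr => hr.2.2.2 a b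

lemma sigmaRel_mul_rstar (s t : S) : sigmaRel (s * rstar t) s := by
  simpa only [mul_rstar_self] using (sigmaRel_refl s).mul (sigmaRel_rstar t s)

lemma sigmaRel_mul_rstar_iff (s t : S) :
    sigmaRel (s * rstar t) (t * rstar s) ↔ sigmaRel s t :=
  ⟨fun h => (sigmaRel_mul_rstar s t).symm.trans (h.trans (sigmaRel_mul_rstar t s)),
   fun h => (sigmaRel_mul_rstar s t).trans (h.trans (sigmaRel_mul_rstar t s).symm)⟩

lemma rstar_mul_rstar (s t : S) : rstar (s * rstar t) = rstar s * rstar t := by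
  rw [rstar_mul, ← rstar_mul_proj]

lemma rstar_mul_rstar_comm (s t : S) : rstar (s * rstar t) = rstar (t * rstar s) := by
  rw [rstar_mul_rstar, rstar_mul_rstar, rstar_comm]

lemma sigmaRel_of_mul_rstar_eq {s t : S} (h : s * rstar t = t * rstar s) : sigmaRel s t :=
  (sigmaRel_mul_rstar_iff s t).1 (h ▸ sigmaRel_refl _)

lemma eq_of_mul_rstar_eq_of_rstar_eq {s t : S} (h : s * rstar t = t * rstar s)
    (hst : rstar s = rstar t) : s = t := by
  rwa [hst, mul_rstar_self, ← hst, mul_rstar_self] at h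

/-- A restriction semigroup is proper iff the compatibility relation coincides
with the minimum reduced congruence `σ`. -/
theorem stmt13 (S : Type*) [RestrictionSemigroup S] :
    (∀ s t : S, sigmaRel s t → rstar s = rstar t → s = t) ↔
    (∀ s t : S, s * rstar t = t * rstar s ↔ sigmaRel s t) := by
  constructor
  · intro hproper s t
    refine ⟨sigmaRel_of_mul_rstar_eq, fun hst => ?_⟩
    exact hproper _ _ ((sigmaRel_mul_rstar_iff s t).2 hst) (rstar_mul_rstar_comm s t)
  · intro hcompat s t hst hstar
    exact eq_of_mul_rstar_eq_of_rstar_eq ((hcompat s t).2 hst) hstar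
end

section
/- Let S be a restriction semigroup with local units acting on its character space: for s ∈ S, β_s is the partial map with domain D_{s*} = {φ : φ(s*) = 1} defined by β_s(φ)(e) = φ((es)*). Then β_s(φ) is a character (nonzero and meet-preserving), and β is a (·, *)-morphism: β_{st} = β_s ∘ β_t (with equal domains) and β_{t*} equals the identity map on the domain of β_t. -/
open RestrictionSemigroup

variable {S : Type*} [RestrictionSemigroup S]

/-- A character of the projection semilattice `P(S)` of `S`: a nonzero
(`Prop`-valued) meet-semilattice morphism on the projections (the meet of
projections being their product). -/
def IsProjChar (φ : S → Prop) : Prop :=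
  (∃ e : S, rstar e = e ∧ φ e) ∧
  ∀ e f : S, rstar e = e → rstar f = f → (φ (e * f) ↔ φ e ∧ φ f)

/-- The spectral action: `β_s(φ)(e) = φ((es)*)`, defined on the domain
`D_{s*} = {φ : φ(s*) = 1}`. -/
def beta (s : S) (φ : S → Prop) : S → Prop := fun e => φ (rstar (e * s))

namespace RestrictionSemigroup

lemma rstar_mul_rstar_self (x : S) : rstar x * rstar x = rstar x := by
  have h := rstar_mul x (rstar x)
  rwa [mul_rstar_self, ← rstar_mul_proj, eq_comm] at h

lemma rstar_rstar (x : S) : rstar (rstar x) = rstar x := by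
  rw [← rstar_mul_rstar_self x, ← rstar_mul_proj]

lemma rstar_mul_rstar_of_rstar_eq {e : S} (he : rstar e = e) (t : S) :
    rstar (e * rstar t) = e * rstar t := by
  rw [rstar_mul, ← rstar_mul_proj, he]

lemma mul_eq_mul_rstar_mul_of_rstar_eq {e : S} (he : rstar e = e) (t : S) :
    e * t = t * rstar (e * t) := by
  rw [← restriction, he]

lemma rstar_mul_mul_rstar_mul {e f : S} (hf : rstar f = f) (s : S) :
    rstar (e * s) * rstar (f * s) = rstar (e * f * s) := by
  rw [rstar_mul_proj, ← rstar_mul, mul_assoc e s, ← mul_eq_mul_rstar_mul_of_rstar_eq hf,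
    ← mul_assoc]

lemma rstar_mul_eq_rstar_mul_rstar_mul (s t : S) : rstar (s * t) = rstar t * rstar (s * t) :=
  calc rstar (s * t) = rstar (t * rstar (s * t)) := by conv_lhs => rw [rstar_mul, restriction]
    _ = rstar t * rstar (s * t) := by rw [rstar_mul, ← rstar_mul_proj]

end RestrictionSemigroup

open RestrictionSemigroup

lemma beta_mul (s t : S) (φ : S → Prop) : beta (s * t) φ = beta s (beta t φ) := by
  ext e
  simp only [beta, ← mul_assoc, ← rstar_mul (e * s) t]

lemma beta_apply_rstar (s t : S) (φ : S → Prop) : beta t φ (rstar s) ↔ φ (rstar (s * t)) := by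
  rw [beta, ← rstar_mul]

namespace IsProjChar

variable {φ : S → Prop}

lemma apply_mul_iff (hφ : IsProjChar φ) {e f : S} (he : rstar e = e) (hf : rstar f = f) :
    φ (e * f) ↔ φ e ∧ φ f :=
  hφ.2 e f he hf

lemma apply_rstar_of_apply_rstar_mul (hφ : IsProjChar φ) {s t : S} (h : φ (rstar (s * t))) :
    φ (rstar t) := by
  rw [rstar_mul_eq_rstar_mul_rstar_mul s t,
    hφ.apply_mul_iff (rstar_rstar t) (rstar_rstar (s * t))] at h
  exact h.1

lemma isProjChar_beta {s e : S} (hφ : IsProjChar φ) (he : rstar e = e) (hes : e * s = s)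
    (hs : φ (rstar s)) : IsProjChar (beta s φ) := by
  refine ⟨⟨e, he, by rwa [beta, hes]⟩, fun f g _ hg => ?_⟩
  simp only [beta, ← rstar_mul_mul_rstar_mul hg]
  exact hφ.apply_mul_iff (rstar_rstar _) (rstar_rstar _)

lemma beta_rstar_apply_iff (hφ : IsProjChar φ) {t e : S} (ht : φ (rstar t))
    (he : rstar e = e) : beta (rstar t) φ e ↔ φ e := by
  rw [beta, rstar_mul_rstar_of_rstar_eq he, hφ.apply_mul_iff he (rstar_rstar t)]
  exact and_iff_left ht

end IsProjChar

/-- For a restriction semigroup `S` with local units, the spectral action is well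
defined and is a `(·, *)`-morphism: `β_s(φ)` is a character whenever `φ` is a
character in `D_{s*}`; `β_{st} = β_s ∘ β_t` with equal domains; and `β_{t*}`
is the identity map on the domain `D_{t*}` of `β_t`. -/
theorem stmt16
    (hlu : ∀ s : S, ∃ e f : S, rstar e = e ∧ rstar f = f ∧ e * s = s ∧ s * f = s) :
    -- β_s(φ) is a character (nonzero and meet-preserving)
    (∀ s : S, ∀ φ : S → Prop, IsProjChar φ → φ (rstar s) → IsProjChar (beta s φ)) ∧
    -- equal domains: φ ∈ dom(β_{st}) iff φ ∈ dom(β_t) and β_t(φ) ∈ dom(β_s)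
    (∀ s t : S, ∀ φ : S → Prop, IsProjChar φ →
      (φ (rstar (s * t)) ↔ φ (rstar t) ∧ beta t φ (rstar s))) ∧
    -- β_{st} = β_s ∘ β_t on the common domain (as functions on projections)
    (∀ s t : S, ∀ φ : S → Prop, IsProjChar φ → φ (rstar (s * t)) →
      ∀ e : S, rstar e = e → (beta (s * t) φ e ↔ beta s (beta t φ) e)) ∧
    -- β_{t*} is the identity on the domain of β_t
    (∀ t : S, ∀ φ : S → Prop, IsProjChar φ → φ (rstar t) →
      ∀ e : S, rstar e = e → (beta (rstar t) φ e ↔ φ e)) := by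
  refine ⟨fun s φ hφ hs => ?_, fun s t φ hφ => ?_, fun s t φ _ _ e _ => ?_,
    fun t φ hφ ht e he => hφ.beta_rstar_apply_iff ht he⟩
  · obtain ⟨e, -, he, -, hes, -⟩ := hlu s
    exact hφ.isProjChar_beta he hes hs
  · rw [beta_apply_rstar]
    exact ⟨fun h => ⟨hφ.apply_rstar_of_apply_rstar_mul h, h⟩, And.right⟩
  · rw [beta_mul]
end
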